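/- arXiv:math/0307086 — 5 statements merged into one kernel-verified Lean document; each statement's English description precedes it below -/
import Mathlib

section
/- Every elementary sublattice L of the lattice of closed sets of a compact Hausdorff space X is separative: whenever a, b ∈ L with a ⊄ b, there exists c ∈ L with c ≤ a, c > ⊥, and c ⊓ b = ⊥. -/
open FirstOrder TopologicalSpace

/-- Function symbols of the language of bounded lattices. -/
inductive LatFunc : ℕ → Type
  | bot : LatFunc 0
  | top : LatFunc 0
  | inf : LatFunc 2
  | sup : LatFunc 2

/-- The first-order language of bounded lattices. -/
def latticeLang : FirstOrder.Language where
  Functions := LatFunc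
  Relations := fun _ => Empty

/-- Every bounded lattice is a structure for the language of bounded lattices. -/
instance latticeLangStructure (α : Type*) [Lattice α] [BoundedOrder α] :
    latticeLang.Structure α where
  funMap {n} f x :=
    match f with
    | .bot => ⊥
    | .top => ⊤
    | .inf => x 0 ⊓ x 1
    | .sup => x 0 ⊔ x 1
  RelMap {n} r := r.elim

/-!
In a T₁ space every point outside `b` gives a nonzero closed set `{x} ≤ a` disjoint from `b`.
The existence of such a `c` is a first-order property of the parameters `a` and `b`, so an
elementary sublattice containing them contains a witness, which is again a witness in `Closeds X`
because the inclusion is an elementary embedding.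
-/

open FirstOrder.Language

def disjointBelowFormula : latticeLang.BoundedFormula (Fin 2) 1 :=
  let meet (t₁ t₂ : latticeLang.Term (Fin 2 ⊕ Fin 1)) := Functions.apply₂ LatFunc.inf t₁ t₂
  let bot : latticeLang.Term (Fin 2 ⊕ Fin 1) := Constants.term LatFunc.bot
  let c : latticeLang.Term (Fin 2 ⊕ Fin 1) := &0
  meet c (Term.var (.inl 0)) =' c ⊓ ∼(c =' bot) ⊓ meet c (Term.var (.inl 1)) =' bot

theorem realize_disjointBelowFormula {M : Type*} [Lattice M] [BoundedOrder M]
    (v : Fin 2 → M) (xs : Fin 1 → M) :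
    disjointBelowFormula.Realize v xs ↔ xs 0 ≤ v 0 ∧ xs 0 ≠ ⊥ ∧ xs 0 ⊓ v 1 = ⊥ := by
  simp only [disjointBelowFormula, BoundedFormula.realize_inf, BoundedFormula.realize_not,
    BoundedFormula.realize_bdEqual, and_assoc, ← inf_eq_left (a := xs 0)]
  -- the remaining terms are `funMap` applications, which unfold to `⊓` and `⊥`
  rfl

theorem realize_ex_disjointBelowFormula {M : Type*} [Lattice M] [BoundedOrder M]
    (v : Fin 2 → M) :
    Formula.Realize (∃' disjointBelowFormula) v ↔ ∃ c : M, c ≤ v 0 ∧ c ≠ ⊥ ∧ c ⊓ v 1 = ⊥ := by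
  simp only [Formula.Realize, BoundedFormula.realize_ex, realize_disjointBelowFormula]
  rfl

namespace FirstOrder.Language.ElementarySubstructure

theorem exists_le_ne_bot_inf_eq_bot {M : Type*} [Lattice M] [BoundedOrder M]
    (L : latticeLang.ElementarySubstructure M) {a b : M} (ha : a ∈ L) (hb : b ∈ L)
    (h : ∃ c : M, c ≤ a ∧ c ≠ ⊥ ∧ c ⊓ b = ⊥) : ∃ c ∈ L, c ≤ a ∧ c ≠ ⊥ ∧ c ⊓ b = ⊥ := by
  let v : Fin 2 → L := ![⟨a, ha⟩, ⟨b, hb⟩]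
  have hM : Formula.Realize (∃' disjointBelowFormula) (L.subtype ∘ v) := by
    rwa [realize_ex_disjointBelowFormula]
  obtain ⟨c, hc⟩ := BoundedFormula.realize_ex.1 ((L.subtype.map_formula _ v).1 hM)
  rw [← L.subtype.map_boundedFormula, realize_disjointBelowFormula] at hc
  exact ⟨c, c.2, hc⟩

end FirstOrder.Language.ElementarySubstructure

theorem TopologicalSpace.Closeds.exists_le_ne_bot_inf_eq_bot_of_not_le {X : Type*}
    [TopologicalSpace X] [T1Space X] {a b : Closeds X} (hab : ¬a ≤ b) :
    ∃ c : Closeds X, c ≤ a ∧ c ≠ ⊥ ∧ c ⊓ b = ⊥ := by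
  obtain ⟨x, hxa, hxb⟩ := SetLike.not_le_iff_exists.1 hab
  refine ⟨{x}, ?_, ?_, ?_⟩
  · simpa [← SetLike.coe_subset_coe]
  · simp [← SetLike.coe_ne_coe]
  · simpa [← SetLike.coe_set_eq]

theorem elementary_sublattice_separative_general (X : Type*) [TopologicalSpace X]
    [T2Space X]
    (L : latticeLang.ElementarySubstructure (Closeds X))
    (a b : Closeds X) (ha : a ∈ L) (hb : b ∈ L) (hab : ¬ a ≤ b) :
    ∃ c ∈ L, c ≤ a ∧ c ≠ ⊥ ∧ c ⊓ b = ⊥ :=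
  L.exists_le_ne_bot_inf_eq_bot ha hb (Closeds.exists_le_ne_bot_inf_eq_bot_of_not_le hab)

/-- Every elementary sublattice `L` of the lattice of closed sets of a compact Hausdorff
space `X` is separative: whenever `a, b ∈ L` with `¬ a ≤ b`, there exists `c ∈ L`
with `c ≤ a`, `c ≠ ⊥` and `c ⊓ b = ⊥`. -/
theorem elementary_sublattice_separative (X : Type*) [TopologicalSpace X]
    [CompactSpace X] [T2Space X]
    (L : latticeLang.ElementarySubstructure (Closeds X))
    (a b : Closeds X) (ha : a ∈ L) (hb : b ∈ L) (hab : ¬ a ≤ b) :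
    ∃ c ∈ L, c ≤ a ∧ c ≠ ⊥ ∧ c ⊓ b = ⊥ :=
  elementary_sublattice_separative_general X L a b ha hb hab
end

section
/- If X is a compact Hausdorff space and H ⊆ X is closed with no connected component of H meeting both closed sets A and B, then there exist disjoint closed sets F, G with F ∪ G = H, A ∩ H ⊆ F, and B ∩ H ⊆ G. -/
open Set

lemma exists_clopen_disjoint_of_connectedComponent_disjoint
    {α : Type*} [TopologicalSpace α] [CompactSpace α] [T2Space α]
    {K : Set α} (hK : IsClosed K) (x : α) (hx : Disjoint (connectedComponent x) K) :
    ∃ U : Set α, IsClopen U ∧ x ∈ U ∧ Disjoint U K := by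
  rw [connectedComponent_eq_iInter_isClopen x, disjoint_comm,
    disjoint_iff_inter_eq_empty] at hx
  obtain ⟨t, ht⟩ := hK.isCompact.elim_finite_subfamily_closed
    (fun s : { s : Set α // IsClopen s ∧ x ∈ s } => s.1)
    (fun s => s.2.1.1) hx
  refine ⟨⋂ i ∈ t, (i : { s : Set α // IsClopen s ∧ x ∈ s }).1,
    isClopen_biInter_finset fun i _ => i.2.1, mem_iInter₂.2 fun i _ => i.2.2, ?_⟩
  rw [disjoint_comm, disjoint_iff_inter_eq_empty]
  exact ht

/-- If `X` is compact Hausdorff, `H ⊆ X` is closed and no connected component of `H`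
meets both closed sets `A` and `B`, then there are disjoint closed sets `F, G` with
`F ∪ G = H`, `A ∩ H ⊆ F` and `B ∩ H ⊆ G`. -/
theorem separate_components (X : Type*) [TopologicalSpace X] [CompactSpace X] [T2Space X]
    (A B H : Set X) (hA : IsClosed A) (hB : IsClosed B) (hH : IsClosed H)
    (hcomp : ∀ x ∈ H, ¬((connectedComponentIn H x ∩ A).Nonempty ∧
      (connectedComponentIn H x ∩ B).Nonempty)) :
    ∃ F G : Set X, IsClosed F ∧ IsClosed G ∧ Disjoint F G ∧ F ∪ G = H ∧
      A ∩ H ⊆ F ∧ B ∩ H ⊆ G := by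
  haveI : CompactSpace H := isCompact_iff_compactSpace.mp hH.isCompact
  set A' : Set H := Subtype.val ⁻¹' A with hA'
  set B' : Set H := Subtype.val ⁻¹' B with hB'
  have hA'c : IsClosed A' := hA.preimage continuous_subtype_val
  have hB'c : IsClosed B' := hB.preimage continuous_subtype_val
  -- each point of A' has a clopen neighborhood disjoint from B'
  have key : ∀ a : H, a ∈ A' → ∃ U : Set H, IsClopen U ∧ a ∈ U ∧ Disjoint U B' := by
    intro a ha
    apply exists_clopen_disjoint_of_connectedComponent_disjoint hB'c
    rw [Set.disjoint_left]
    rintro y hy hyB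
    refine hcomp a.1 a.2 ⟨⟨a.1, ?_, ha⟩, ⟨y.1, ?_, hyB⟩⟩
    · exact mem_connectedComponentIn a.2
    · rw [connectedComponentIn_eq_image a.2]
      exact ⟨y, hy, rfl⟩
  choose! U hUc hUm hUd using key
  -- A' is compact; cover by finitely many of the U a
  obtain ⟨t, ht⟩ := hA'c.isCompact.elim_finite_subcover (fun a : A' => U a)
    (fun a => (hUc a a.2).2) (fun a ha => mem_iUnion.2 ⟨⟨a, ha⟩, hUm a ha⟩)
  set V : Set H := ⋃ a ∈ t, U a with hV
  have hVc : IsClopen V := isClopen_biUnion_finset fun a _ => hUc a a.2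
  have hAV : A' ⊆ V := ht
  have hVB : Disjoint V B' := by
    rw [hV, disjoint_iff_inter_eq_empty, iUnion₂_inter]
    simp only [iUnion_eq_empty]
    intro a _
    exact disjoint_iff_inter_eq_empty.mp (hUd a a.2)
  refine ⟨Subtype.val '' V, Subtype.val '' Vᶜ, ?_, ?_, ?_, ?_, ?_, ?_⟩
  · exact (hVc.1.isCompact.image continuous_subtype_val).isClosed
  · exact ((hVc.2.isClosed_compl).isCompact.image continuous_subtype_val).isClosed
  · exact (disjoint_compl_right).image Subtype.val_injective.injOn (subset_univ _) (subset_univ _)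
  · rw [← image_union, union_compl_self, image_univ, Subtype.range_coe]
  · rintro x ⟨hxA, hxH⟩
    exact ⟨⟨x, hxH⟩, hAV hxA, rfl⟩
  · rintro x ⟨hxB, hxH⟩
    refine ⟨⟨x, hxH⟩, fun hxV => ?_, rfl⟩
    exact (disjoint_left.mp hVB) hxV hxB
end

section
/- A compact T1 space X satisfies dim X ≤ n if and only if for all closed sets F₁,…,F_{n+2} with empty intersection there exist closed sets G₁,…,G_{n+2} with F_i ⊆ G_i, ⋂ G_i = ∅, and ⋃ G_i = X (Hemmingsen's characterization). -/
/-- `CovDimLE X n` means the covering dimension of `X` is at most `n`: every finite open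
cover has an open refinement of order at most `n + 1`. -/
def CovDimLE (X : Type*) [TopologicalSpace X] (n : ℕ) : Prop :=
  ∀ (ι : Type) (U : ι → Set X), Finite ι → (∀ i, IsOpen (U i)) → (⋃ i, U i) = Set.univ →
    ∃ (κ : Type) (V : κ → Set X), (∀ j, IsOpen (V j)) ∧ (⋃ j, V j) = Set.univ ∧
      (∀ j, ∃ i, V j ⊆ U i) ∧
      ∀ (x : X) (s : Finset κ), (∀ j ∈ s, x ∈ V j) → s.card ≤ n + 1

/-- One-step shrinking: given a finite open cover and an `(n+2)`-element set `S` of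
indices, we can shrink the cover so that the intersection over `S` becomes empty. -/
lemma hemmingsen_step {X : Type*} [TopologicalSpace X] {n : ℕ}
    (hH : ∀ F : Fin (n + 2) → Set X, (∀ i, IsClosed (F i)) → (⋂ i, F i) = ∅ →
        ∃ G : Fin (n + 2) → Set X, (∀ i, IsClosed (G i)) ∧ (∀ i, F i ⊆ G i) ∧
          (⋂ i, G i) = ∅ ∧ (⋃ i, G i) = Set.univ)
    {ι : Type} [DecidableEq ι] (V : ι → Set X)
    (hVo : ∀ i, IsOpen (V i)) (hVc : (⋃ i, V i) = Set.univ)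
    (S : Finset ι) (hS : S.card = n + 2) :
    ∃ V' : ι → Set X, (∀ i, IsOpen (V' i)) ∧ (∀ i, V' i ⊆ V i) ∧
      (⋃ i, V' i) = Set.univ ∧ (⋂ i ∈ S, V' i) = ∅ := by
  classical
  have hcard : Fintype.card (Fin (n + 2)) = Fintype.card {x // x ∈ S} := by
    simp [hS]
  let e : Fin (n + 2) ≃ {x // x ∈ S} := Fintype.equivOfCardEq hcard
  -- union of the sets outside `S`
  set R : Set X := ⋃ i, ⋃ (_ : i ∉ S), V i with hR
  have hRo : IsOpen R := isOpen_iUnion fun i => isOpen_iUnion fun _ => hVo i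
  -- the auxiliary (n+2)-element open cover
  set W : Fin (n + 2) → Set X := fun m => if m = 0 then V (e 0) ∪ R else V (e m) with hW
  have hWo : ∀ m, IsOpen (W m) := by
    intro m
    by_cases hm : m = 0 <;> simp [hW, hm, hRo, hVo, (hVo _).union hRo]
  have hWc : (⋃ m, W m) = Set.univ := by
    apply Set.eq_univ_of_forall
    intro x
    have : x ∈ ⋃ i, V i := by rw [hVc]; trivial
    obtain ⟨i, hi⟩ := Set.mem_iUnion.mp this
    by_cases hiS : i ∈ S
    · refine Set.mem_iUnion.mpr ⟨e.symm ⟨i, hiS⟩, ?_⟩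
      have hei : (e (e.symm ⟨i, hiS⟩) : ι) = i := by rw [e.apply_symm_apply]
      by_cases h0 : e.symm ⟨i, hiS⟩ = 0
      · simp only [hW, h0, if_pos rfl]
        left
        have : (e 0 : ι) = i := by rw [← h0, e.apply_symm_apply]
        rwa [this]
      · simp only [hW, if_neg h0]
        rwa [hei]
    · refine Set.mem_iUnion.mpr ⟨0, ?_⟩
      simp only [hW, if_pos rfl]
      right
      exact Set.mem_iUnion.mpr ⟨i, Set.mem_iUnion.mpr ⟨hiS, hi⟩⟩
  -- apply the hypothesis to the complements
  have hFcl : ∀ m, IsClosed (W m)ᶜ := fun m => (hWo m).isClosed_compl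
  have hFempty : (⋂ m, (W m)ᶜ) = ∅ := by
    rw [← Set.compl_iUnion, hWc, Set.compl_univ]
  obtain ⟨G, hGcl, hGsub, hGint, hGun⟩ := hH (fun m => (W m)ᶜ) hFcl hFempty
  set A : Fin (n + 2) → Set X := fun m => (G m)ᶜ with hA
  have hAo : ∀ m, IsOpen (A m) := fun m => (hGcl m).isOpen_compl
  have hAW : ∀ m, A m ⊆ W m := by
    intro m
    have := Set.compl_subset_compl.mpr (hGsub m)
    rwa [compl_compl] at this
  have hAc : (⋃ m, A m) = Set.univ := by
    rw [hA, ← Set.compl_iInter, hGint, Set.compl_empty]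
  have hAe : (⋂ m, A m) = ∅ := by
    rw [hA, ← Set.compl_iUnion, hGun, Set.compl_univ]
  -- the shrunk cover
  refine ⟨fun i => if h : i ∈ S then A (e.symm ⟨i, h⟩) ∩ V i else V i, ?_, ?_, ?_, ?_⟩
  · intro i
    by_cases h : i ∈ S <;> simp [h, (hAo _).inter (hVo i), hVo i]
  · intro i
    by_cases h : i ∈ S <;> simp [h, Set.inter_subset_right]
  · apply Set.eq_univ_of_forall
    intro x
    have : x ∈ ⋃ m, A m := by rw [hAc]; trivial
    obtain ⟨m, hm⟩ := Set.mem_iUnion.mp this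
    have hxW : x ∈ W m := hAW m hm
    by_cases h0 : m = 0
    · subst h0
      simp only [hW, if_pos rfl] at hxW
      rcases hxW with hxV | hxR
      · refine Set.mem_iUnion.mpr ⟨(e 0 : ι), ?_⟩
        have hmem : (e 0 : ι) ∈ S := (e 0).2
        rw [dif_pos hmem]
        have : e.symm ⟨(e 0 : ι), hmem⟩ = 0 := by
          rw [show (⟨(e 0 : ι), hmem⟩ : {x // x ∈ S}) = e 0 from Subtype.ext rfl,
            e.symm_apply_apply]
        rw [this]
        exact ⟨hm, hxV⟩
      · obtain ⟨i, hi⟩ := Set.mem_iUnion.mp hxR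
        obtain ⟨hiS, hxi⟩ := Set.mem_iUnion.mp hi
        refine Set.mem_iUnion.mpr ⟨i, ?_⟩
        rw [dif_neg hiS]
        exact hxi
    · refine Set.mem_iUnion.mpr ⟨(e m : ι), ?_⟩
      have hmem : (e m : ι) ∈ S := (e m).2
      rw [dif_pos hmem]
      have : e.symm ⟨(e m : ι), hmem⟩ = m := by
        rw [show (⟨(e m : ι), hmem⟩ : {x // x ∈ S}) = e m from Subtype.ext rfl,
          e.symm_apply_apply]
      rw [this]
      simp only [hW, if_neg h0] at hxW
      exact ⟨hm, hxW⟩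
  · apply Set.eq_empty_iff_forall_notMem.mpr
    intro x hx
    have hxA : ∀ m, x ∈ A m := by
      intro m
      have hmem : (e m : ι) ∈ S := (e m).2
      have hx' : x ∈ if h : (e m : ι) ∈ S then A (e.symm ⟨(e m : ι), h⟩) ∩ V (e m : ι)
          else V (e m : ι) := by
        have := Set.mem_iInter₂.mp hx (e m : ι) hmem
        exact this
      rw [dif_pos hmem] at hx'
      have heq : e.symm ⟨(e m : ι), hmem⟩ = m := by
        rw [show (⟨(e m : ι), hmem⟩ : {x // x ∈ S}) = e m from Subtype.ext rfl,
          e.symm_apply_apply]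
      rw [heq] at hx'
      exact hx'.1
    have : x ∈ ⋂ m, A m := Set.mem_iInter.mpr hxA
    rw [hAe] at this
    exact this

/-- Iterating the one-step shrinking over a finite family of `(n+2)`-element sets. -/
lemma hemmingsen_iterate {X : Type*} [TopologicalSpace X] {n : ℕ}
    (hH : ∀ F : Fin (n + 2) → Set X, (∀ i, IsClosed (F i)) → (⋂ i, F i) = ∅ →
        ∃ G : Fin (n + 2) → Set X, (∀ i, IsClosed (G i)) ∧ (∀ i, F i ⊆ G i) ∧
          (⋂ i, G i) = ∅ ∧ (⋃ i, G i) = Set.univ)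
    {ι : Type} [DecidableEq ι] (U : ι → Set X)
    (hUo : ∀ i, IsOpen (U i)) (hUc : (⋃ i, U i) = Set.univ)
    (𝒮 : Finset (Finset ι)) (h𝒮 : ∀ S ∈ 𝒮, S.card = n + 2) :
    ∃ V : ι → Set X, (∀ i, IsOpen (V i)) ∧ (∀ i, V i ⊆ U i) ∧
      (⋃ i, V i) = Set.univ ∧ ∀ S ∈ 𝒮, (⋂ i ∈ S, V i) = ∅ := by
  classical
  induction 𝒮 using Finset.induction_on with
  | empty => exact ⟨U, hUo, fun i => subset_rfl, hUc, by simp⟩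
  | @insert S 𝒯 hS ih =>
    obtain ⟨V, hVo, hVU, hVc, hVe⟩ := ih fun T hT => h𝒮 T (Finset.mem_insert_of_mem hT)
    obtain ⟨V', hV'o, hV'V, hV'c, hV'e⟩ :=
      hemmingsen_step hH V hVo hVc S (h𝒮 S (Finset.mem_insert_self S 𝒯))
    refine ⟨V', hV'o, fun i => (hV'V i).trans (hVU i), hV'c, ?_⟩
    intro T hT
    rcases Finset.mem_insert.mp hT with rfl | hT'
    · exact hV'e
    · apply Set.eq_empty_iff_forall_notMem.mpr
      intro x hx
      have : x ∈ ⋂ i ∈ T, V i :=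
        Set.mem_iInter₂.mpr fun i hi => hV'V i (Set.mem_iInter₂.mp hx i hi)
      rw [hVe T hT'] at this
      exact this

/-- Hemmingsen's characterization: a compact T1 space `X` satisfies `dim X ≤ n` iff for
all closed sets `F₁, …, F_{n+2}` with empty intersection there are closed sets
`G₁, …, G_{n+2}` with `F i ⊆ G i`, `⋂ G i = ∅` and `⋃ G i = X`. -/
theorem hemmingsen_characterization (X : Type*) [TopologicalSpace X]
    [CompactSpace X] [T1Space X] (n : ℕ) :
    CovDimLE X n ↔
      ∀ F : Fin (n + 2) → Set X, (∀ i, IsClosed (F i)) → (⋂ i, F i) = ∅ →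
        ∃ G : Fin (n + 2) → Set X, (∀ i, IsClosed (G i)) ∧ (∀ i, F i ⊆ G i) ∧
          (⋂ i, G i) = ∅ ∧ (⋃ i, G i) = Set.univ := by
  classical
  constructor
  · -- dim ≤ n → Hemmingsen condition
    intro hdim F hFcl hFempty
    set U : Fin (n + 2) → Set X := fun i => (F i)ᶜ with hU
    have hUopen : ∀ i, IsOpen (U i) := fun i => (hFcl i).isOpen_compl
    have hUcover : (⋃ i, U i) = Set.univ := by
      rw [hU, ← Set.compl_iInter, hFempty, Set.compl_empty]
    obtain ⟨κ, V, hVopen, hVcover, hVref, hVord⟩ :=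
      hdim (Fin (n + 2)) U inferInstance hUopen hUcover
    choose r hr using hVref
    set W : Fin (n + 2) → Set X := fun i => ⋃ j, ⋃ (_ : r j = i), V j with hWdef
    have hWopen : ∀ i, IsOpen (W i) :=
      fun i => isOpen_iUnion fun j => isOpen_iUnion fun _ => hVopen j
    have hWU : ∀ i, W i ⊆ U i := by
      intro i x hx
      obtain ⟨j, hj⟩ := Set.mem_iUnion.mp hx
      obtain ⟨hrj, hxj⟩ := Set.mem_iUnion.mp hj
      exact hrj ▸ hr j hxj
    refine ⟨fun i => (W i)ᶜ, fun i => (hWopen i).isClosed_compl, ?_, ?_, ?_⟩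
    · intro i
      have : F i = (U i)ᶜ := by rw [hU]; simp
      rw [this]
      exact Set.compl_subset_compl.mpr (hWU i)
    · rw [← Set.compl_iUnion, Set.compl_empty_iff]
      apply Set.eq_univ_of_forall
      intro x
      have : x ∈ ⋃ j, V j := by rw [hVcover]; trivial
      obtain ⟨j, hj⟩ := Set.mem_iUnion.mp this
      exact Set.mem_iUnion.mpr ⟨r j, Set.mem_iUnion.mpr ⟨j, Set.mem_iUnion.mpr ⟨rfl, hj⟩⟩⟩
    · rw [← Set.compl_iInter, Set.compl_univ_iff]
      apply Set.eq_empty_iff_forall_notMem.mpr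
      intro x hx
      have hxW : ∀ i, x ∈ W i := Set.mem_iInter.mp hx
      have hch : ∀ i : Fin (n + 2), ∃ j, r j = i ∧ x ∈ V j := by
        intro i
        obtain ⟨j, hj⟩ := Set.mem_iUnion.mp (hxW i)
        obtain ⟨hrj, hxj⟩ := Set.mem_iUnion.mp hj
        exact ⟨j, hrj, hxj⟩
      choose c hc1 hc2 using hch
      have hcinj : Function.Injective c := by
        intro a b hab
        rw [← hc1 a, ← hc1 b, hab]
      have hcard : (Finset.univ.image c).card = n + 2 := by
        rw [Finset.card_image_of_injective _ hcinj, Finset.card_univ, Fintype.card_fin]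
      have := hVord x (Finset.univ.image c) ?_
      · omega
      · intro j hj
        obtain ⟨i, _, rfl⟩ := Finset.mem_image.mp hj
        exact hc2 i
  · -- Hemmingsen condition → dim ≤ n
    intro hH ι U hfin hUo hUc
    haveI := hfin
    cases nonempty_fintype ι
    set 𝒮 : Finset (Finset ι) :=
      Finset.univ.powerset.filter (fun S => S.card = n + 2) with h𝒮def
    have h𝒮 : ∀ S ∈ 𝒮, S.card = n + 2 := by
      intro S hS
      exact (Finset.mem_filter.mp hS).2
    obtain ⟨V, hVo, hVU, hVc, hVe⟩ := hemmingsen_iterate hH U hUo hUc 𝒮 h𝒮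
    refine ⟨ι, V, hVo, hVc, fun j => ⟨j, hVU j⟩, ?_⟩
    intro x s hs
    by_contra h
    push_neg at h
    have hle : n + 2 ≤ s.card := h
    obtain ⟨T, hTs, hTcard⟩ := Finset.exists_subset_card_eq hle
    have hT𝒮 : T ∈ 𝒮 := by
      rw [h𝒮def, Finset.mem_filter]
      exact ⟨Finset.mem_powerset.mpr (Finset.subset_univ T), hTcard⟩
    have hx : x ∈ ⋂ i ∈ T, V i :=
      Set.mem_iInter₂.mpr fun i hi => hs i (hTs hi)
    rw [hVe T hT𝒮] at hx
    exact hx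
end

section
/- In the unit interval [0,1], the sublattice of closed sets generated by {[0,q] : q ∈ ℚ ∩ [0,1]} ∪ {[p,1] : p ∈ [0,1] irrational} contains no pair (f, g) of elements with f ∪ g = [0,1], f ∩ g = {c} a singleton, 0 ∉ f, 1 ∉ g; hence this lattice base fails the partition formula I_0(⊤) even though Ind [0,1] = 1. -/
universe u

/-- `IndLe n X` means that the large inductive dimension of `X` is at most `n - 1`. -/
def IndLe : ℕ → ∀ (X : Type u) [TopologicalSpace X], Prop
  | 0 => fun X _ => IsEmpty X
  | (n + 1) => fun X _ => ∀ A B : Set X, IsClosed A → IsClosed B → Disjoint A B →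
      ∃ C : Set X, IsClosed C ∧
        (∃ U V : Set X, IsOpen U ∧ IsOpen V ∧ Disjoint U V ∧ A ⊆ U ∧ B ⊆ V ∧ Cᶜ = U ∪ V) ∧
        IndLe n C

/-- The generating family: the sets `[0, q]` with `q ∈ [0,1]` rational and the sets
`[p, 1]` with `p ∈ [0,1]` irrational. -/
def genFamily : Set (Set ℝ) :=
  {s | ∃ q : ℚ, (q : ℝ) ∈ Set.Icc (0 : ℝ) 1 ∧ s = Set.Icc 0 (q : ℝ)} ∪
  {s | ∃ p : ℝ, p ∈ Set.Icc (0 : ℝ) 1 ∧ Irrational p ∧ s = Set.Icc p 1}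

open Set Metric

/-- A discrete space has inductive dimension at most 0. -/
lemma indLe_one_of_discrete (X : Type u) [TopologicalSpace X] [DiscreteTopology X] :
    IndLe 1 X := by
  intro A B _ _ hAB
  refine ⟨∅, isClosed_empty, ⟨A, Aᶜ, isOpen_discrete _, isOpen_discrete _,
    disjoint_compl_right, subset_rfl, ?_, by rw [Set.compl_empty, Set.union_compl_self]⟩, ?_⟩
  · intro x hx
    simp only [Set.mem_compl_iff]
    exact fun hxA => Set.disjoint_left.mp hAB hxA hx
  · show IsEmpty _
    infer_instance

/-- A `c`-separated subset of `[0,1]` is finite. -/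
lemma sep_finite {T : Set ℝ} (hT : T ⊆ Set.Icc 0 1) {c : ℝ} (hc : 0 < c)
    (hsep : ∀ x ∈ T, ∀ y ∈ T, x < y → c ≤ y - x) : T.Finite := by
  apply Set.Finite.of_finite_image (f := fun x => ⌊x / c⌋)
  · apply Set.Finite.subset (Set.finite_Icc (0 : ℤ) ⌈1 / c⌉)
    rintro n ⟨x, hx, rfl⟩
    refine ⟨Int.floor_nonneg.mpr (div_nonneg (hT hx).1 hc.le), ?_⟩
    calc ⌊x / c⌋ ≤ ⌊1 / c⌋ := Int.floor_le_floor ((div_le_div_iff_of_pos_right hc).mpr (hT hx).2)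
      _ ≤ ⌈1 / c⌉ := Int.floor_le_ceil _
  · intro x hx y hy hxy
    by_contra hne
    have key : ∀ a ∈ T, ∀ b ∈ T, a < b → ⌊a / c⌋ = ⌊b / c⌋ → False := by
      intro a ha b hb hab hfl
      have h1 : (1 : ℝ) ≤ b / c - a / c := by
        rw [div_sub_div_same]
        exact (one_le_div hc).mpr (hsep a ha b hb hab)
      have h2 : |a / c - b / c| < 1 := Int.abs_sub_lt_one_of_floor_eq_floor hfl
      rw [abs_sub_lt_iff] at h2
      linarith [h2.2]
    rcases lt_or_gt_of_ne hne with h | h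
    · exact key x hx y hy h hxy
    · exact key y hy x hx h hxy.symm

/-- The set of points of `[0,1]` at `infDist` exactly `c > 0` from a compact set is finite. -/
lemma level_finite {K : Set ℝ} (hK : IsCompact K) (hKne : K.Nonempty) {c : ℝ} (hc : 0 < c) :
    {y : ℝ | y ∈ Set.Icc (0 : ℝ) 1 ∧ Metric.infDist y K = c}.Finite := by
  set S := {y : ℝ | y ∈ Set.Icc (0 : ℝ) 1 ∧ Metric.infDist y K = c} with hS
  have hwit : ∀ y ∈ S, y - c ∈ K ∨ y + c ∈ K := by
    intro y hy
    obtain ⟨k, hk, hdk⟩ := hK.exists_infDist_eq_dist hKne y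
    have habs : |y - k| = c := by rw [← Real.dist_eq, ← hdk]; exact hy.2
    rcases (abs_eq hc.le).mp habs with h | h
    · left; have : y - c = k := by linarith
      rwa [this]
    · right; have : y + c = k := by linarith
      rwa [this]
  have hSl : {y ∈ S | y - c ∈ K}.Finite := by
    apply sep_finite (fun y hy => hy.1.1) hc
    intro x hx y hy hxy
    by_contra hcon
    push_neg at hcon
    have hd : |x - (y - c)| < c := by
      rw [abs_lt]; constructor <;> linarith
    have : infDist x K ≤ |x - (y - c)| := by
      rw [← Real.dist_eq]; exact infDist_le_dist_of_mem hy.2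
    rw [hx.1.2] at this
    linarith
  have hSr : {y ∈ S | y + c ∈ K}.Finite := by
    apply sep_finite (fun y hy => hy.1.1) hc
    intro x hx y hy hxy
    by_contra hcon
    push_neg at hcon
    have hd : |y - (x + c)| < c := by
      rw [abs_lt]; constructor <;> linarith
    have : infDist y K ≤ |y - (x + c)| := by
      rw [← Real.dist_eq]; exact infDist_le_dist_of_mem hx.2
    rw [hy.1.2] at this
    linarith
  refine Set.Finite.subset (hSl.union hSr) ?_
  intro y hy
  rcases hwit y hy with h | h
  · exact Or.inl ⟨hy, h⟩
  · exact Or.inr ⟨hy, h⟩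

/-- The invariant: sets that are finite unions of intervals `[a,b] ⊆ [0,1]` with
`a = 0` or `a` irrational, and `b = 1` or `b` rational. -/
def GoodPair (p : ℝ × ℝ) : Prop :=
  (p.1 = 0 ∨ Irrational p.1) ∧ (p.2 = 1 ∨ ∃ q : ℚ, p.2 = (q : ℝ)) ∧
    p.1 ∈ Set.Icc (0 : ℝ) 1 ∧ p.2 ∈ Set.Icc (0 : ℝ) 1

def GoodSet : Set (Set ℝ) :=
  {s | ∃ F : Finset (ℝ × ℝ), (∀ p ∈ F, GoodPair p) ∧ s = ⋃ p ∈ F, Set.Icc p.1 p.2}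

lemma goodSet_sublattice : IsSublattice GoodSet := by
  constructor
  · rintro s ⟨F, hF, rfl⟩ t ⟨G, hG, rfl⟩
    refine ⟨F ∪ G, fun p hp => ?_, ?_⟩
    · rcases Finset.mem_union.mp hp with h | h
      exacts [hF p h, hG p h]
    · show (⋃ p ∈ F, Set.Icc p.1 p.2) ∪ (⋃ p ∈ G, Set.Icc p.1 p.2) = _
      ext x
      simp only [Set.mem_union, Set.mem_iUnion, Finset.mem_union]
      constructor
      · rintro (⟨p, hp, hx⟩ | ⟨p, hp, hx⟩)
        exacts [⟨p, Or.inl hp, hx⟩, ⟨p, Or.inr hp, hx⟩]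
      · rintro ⟨p, hp | hp, hx⟩
        exacts [Or.inl ⟨p, hp, hx⟩, Or.inr ⟨p, hp, hx⟩]
  · rintro s ⟨F, hF, rfl⟩ t ⟨G, hG, rfl⟩
    refine ⟨(F ×ˢ G).image (fun pq => (pq.1.1 ⊔ pq.2.1, pq.1.2 ⊓ pq.2.2)), ?_, ?_⟩
    · intro p hp
      simp only [Finset.mem_image, Finset.mem_product] at hp
      obtain ⟨⟨a, b⟩, ⟨ha, hb⟩, rfl⟩ := hp
      obtain ⟨ha1, ha2, ha3, ha4⟩ := hF a ha
      obtain ⟨hb1, hb2, hb3, hb4⟩ := hG b hb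
      refine ⟨?_, ?_, ?_, ?_⟩
      · rcases ha1 with h | h
        · rw [h]; rw [show (0 : ℝ) ⊔ b.1 = b.1 from sup_eq_right.mpr hb3.1]; exact hb1
        · rcases hb1 with h' | h'
          · rw [h']; rw [show a.1 ⊔ (0 : ℝ) = a.1 from sup_eq_left.mpr ha3.1]
            exact Or.inr h
          · rcases le_total a.1 b.1 with hle | hle
            · rw [sup_eq_right.mpr hle]; exact Or.inr h'
            · rw [sup_eq_left.mpr hle]; exact Or.inr h
      · rcases ha2 with h | h
        · rw [h]; rw [show (1 : ℝ) ⊓ b.2 = b.2 from inf_eq_right.mpr hb4.2]; exact hb2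
        · rcases hb2 with h' | h'
          · rw [h']; rw [show a.2 ⊓ (1 : ℝ) = a.2 from inf_eq_left.mpr ha4.2]
            exact Or.inr h
          · rcases le_total a.2 b.2 with hle | hle
            · rw [inf_eq_left.mpr hle]; exact Or.inr h
            · rw [inf_eq_right.mpr hle]; exact Or.inr h'
      · exact ⟨le_sup_of_le_left ha3.1, sup_le ha3.2 hb3.2⟩
      · exact ⟨le_inf ha4.1 hb4.1, inf_le_of_left_le ha4.2⟩
    · show (⋃ p ∈ F, Set.Icc p.1 p.2) ∩ (⋃ p ∈ G, Set.Icc p.1 p.2) = _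
      ext x
      constructor
      · rintro ⟨hxF, hxG⟩
        obtain ⟨a, ha, hxa⟩ := Set.mem_iUnion₂.mp hxF
        obtain ⟨b, hb, hxb⟩ := Set.mem_iUnion₂.mp hxG
        apply Set.mem_iUnion₂.mpr
        refine ⟨(a.1 ⊔ b.1, a.2 ⊓ b.2),
          Finset.mem_image.mpr ⟨(a, b), Finset.mem_product.mpr ⟨ha, hb⟩, rfl⟩, ?_⟩
        show x ∈ Set.Icc (a.1 ⊔ b.1) (a.2 ⊓ b.2)
        rw [show Set.Icc (a.1 ⊔ b.1) (a.2 ⊓ b.2)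
          = Set.Icc a.1 a.2 ∩ Set.Icc b.1 b.2 from (Set.Icc_inter_Icc).symm]
        exact ⟨hxa, hxb⟩
      · intro hx
        obtain ⟨p, hp, hxp⟩ := Set.mem_iUnion₂.mp hx
        obtain ⟨⟨a, b⟩, hab, rfl⟩ := Finset.mem_image.mp hp
        obtain ⟨ha, hb⟩ := Finset.mem_product.mp hab
        have hxp' : x ∈ Set.Icc a.1 a.2 ∩ Set.Icc b.1 b.2 := by
          rw [Set.Icc_inter_Icc]
          exact hxp
        exact ⟨Set.mem_iUnion₂.mpr ⟨a, ha, hxp'.1⟩, Set.mem_iUnion₂.mpr ⟨b, hb, hxp'.2⟩⟩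

lemma genFamily_subset_goodSet : genFamily ⊆ GoodSet := by
  rintro s (⟨q, hq, rfl⟩ | ⟨p, hp, hirr, rfl⟩)
  · refine ⟨{((0 : ℝ), (q : ℝ))}, ?_, by simp⟩
    intro p hp
    rw [Finset.mem_singleton] at hp
    subst hp
    exact ⟨Or.inl rfl, Or.inr ⟨q, rfl⟩, ⟨le_refl _, zero_le_one⟩, hq⟩
  · refine ⟨{(p, (1 : ℝ))}, ?_, by simp⟩
    intro r hr
    rw [Finset.mem_singleton] at hr
    subst hr
    exact ⟨Or.inr hirr, Or.inl rfl, hp, ⟨zero_le_one, le_refl _⟩⟩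

lemma goodSet_subsets {s : Set ℝ} (hs : s ∈ GoodSet) :
    s ⊆ Set.Icc (0 : ℝ) 1 ∧ IsClosed s := by
  obtain ⟨F, hF, rfl⟩ := hs
  constructor
  · intro x hx
    rw [Set.mem_iUnion₂] at hx
    obtain ⟨p, hp, hxp⟩ := hx
    obtain ⟨-, -, h3, h4⟩ := hF p hp
    exact ⟨le_trans h3.1 hxp.1, le_trans hxp.2 h4.2⟩
  · exact isClosed_biUnion_finset (fun p _ => isClosed_Icc)

/-- If `Icc 0 c ∈ GoodSet` with `0 < c < 1`, then `c` is rational. -/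
lemma goodSet_icc_left {c : ℝ} (hc0 : 0 < c) (hc1 : c < 1)
    (h : Set.Icc (0 : ℝ) c ∈ GoodSet) : ∃ q : ℚ, c = (q : ℝ) := by
  obtain ⟨F, hF, hEq⟩ := h
  have hcmem : c ∈ ⋃ p ∈ F, Set.Icc p.1 p.2 := by
    rw [← hEq]; exact ⟨hc0.le, le_refl c⟩
  rw [Set.mem_iUnion₂] at hcmem
  obtain ⟨p, hp, hcp⟩ := hcmem
  have hsub : Set.Icc p.1 p.2 ⊆ Set.Icc (0 : ℝ) c := by
    rw [hEq]; exact fun _ hx => Set.mem_iUnion₂.mpr ⟨p, hp, hx⟩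
  have hp2 : p.2 = c := le_antisymm (hsub ⟨hcp.1.trans hcp.2, le_refl _⟩).2 hcp.2
  obtain ⟨-, h2, -, -⟩ := hF p hp
  rcases h2 with h | ⟨q, hq⟩
  · exact absurd (hp2 ▸ h) hc1.ne
  · exact ⟨q, hp2 ▸ hq⟩

/-- If `Icc c 1 ∈ GoodSet` with `0 < c < 1`, then `c` is irrational. -/
lemma goodSet_icc_right {c : ℝ} (hc0 : 0 < c) (hc1 : c < 1)
    (h : Set.Icc c (1 : ℝ) ∈ GoodSet) : Irrational c := by
  obtain ⟨F, hF, hEq⟩ := h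
  have hcmem : c ∈ ⋃ p ∈ F, Set.Icc p.1 p.2 := by
    rw [← hEq]; exact ⟨le_refl c, hc1.le⟩
  rw [Set.mem_iUnion₂] at hcmem
  obtain ⟨p, hp, hcp⟩ := hcmem
  have hsub : Set.Icc p.1 p.2 ⊆ Set.Icc c (1 : ℝ) := by
    rw [hEq]; exact fun _ hx => Set.mem_iUnion₂.mpr ⟨p, hp, hx⟩
  have hp1 : p.1 = c := le_antisymm hcp.1 (hsub ⟨le_refl _, hcp.1.trans hcp.2⟩).1
  obtain ⟨h1, -, -, -⟩ := hF p hp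
  rcases h1 with h | h
  · exact absurd (hp1 ▸ h) hc0.ne'
  · exact hp1 ▸ h

/-- The sublattice of closed subsets of `[0,1]` generated by
`{[0,q] : q ∈ ℚ ∩ [0,1]} ∪ {[p,1] : p ∈ [0,1] irrational}` contains no pair `(f, g)`
with `f ∪ g = [0,1]`, `f ∩ g` a singleton, `0 ∉ f` and `1 ∉ g`; hence this lattice base
fails the partition formula `I_0(⊤)`, even though `Ind [0,1] = 1`. -/
theorem rational_irrational_base_fails_partition :
    (∀ f ∈ latticeClosure genFamily, ∀ g ∈ latticeClosure genFamily,
      ¬(f ∪ g = Set.Icc (0 : ℝ) 1 ∧ (∃ c : ℝ, f ∩ g = {c}) ∧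
        (0 : ℝ) ∉ f ∧ (1 : ℝ) ∉ g)) ∧
    IndLe 2 (Set.Icc (0 : ℝ) 1) ∧ ¬ IndLe 1 (Set.Icc (0 : ℝ) 1) := by
  have hsub : latticeClosure genFamily ⊆ GoodSet :=
    latticeClosure_min genFamily_subset_goodSet goodSet_sublattice
  refine ⟨?_, ?_, ?_⟩
  · -- Part 1: no partition pair in the lattice
    rintro f hf g hg ⟨huni, ⟨c, hfg⟩, h0f, h1g⟩
    have hfG := hsub hf
    have hgG := hsub hg
    obtain ⟨hfsub, hfc⟩ := goodSet_subsets hfG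
    obtain ⟨hgsub, hgc⟩ := goodSet_subsets hgG
    have h0g : (0 : ℝ) ∈ g := by
      have : (0 : ℝ) ∈ f ∪ g := by rw [huni]; exact ⟨le_refl _, zero_le_one⟩
      rcases this with h | h
      · exact absurd h h0f
      · exact h
    have h1f : (1 : ℝ) ∈ f := by
      have : (1 : ℝ) ∈ f ∪ g := by rw [huni]; exact ⟨zero_le_one, le_refl _⟩
      rcases this with h | h
      · exact h
      · exact absurd h h1g
    have hcf : c ∈ f := by
      have : c ∈ f ∩ g := by rw [hfg]; rfl
      exact this.1
    have hcg : c ∈ g := by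
      have : c ∈ f ∩ g := by rw [hfg]; rfl
      exact this.2
    have hcI : c ∈ Set.Icc (0 : ℝ) 1 := hfsub hcf
    have hc0 : 0 < c := by
      rcases lt_or_eq_of_le hcI.1 with h | h
      · exact h
      · exact absurd (h ▸ hcf) h0f
    have hc1 : c < 1 := by
      rcases lt_or_eq_of_le hcI.2 with h | h
      · exact h
      · exact absurd (h.symm ▸ hcg) h1g
    -- Connectedness: Ico 0 c ⊆ g
    have hIcog : Set.Ico (0 : ℝ) c ⊆ g := by
      have hpre := isPreconnected_Ico (a := (0 : ℝ)) (b := c)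
      by_contra hcon
      have h1 : (Set.Ico (0 : ℝ) c ∩ gᶜ).Nonempty := by
        rw [Set.not_subset] at hcon
        obtain ⟨x, hx1, hx2⟩ := hcon
        exact ⟨x, hx1, hx2⟩
      have h2 : (Set.Ico (0 : ℝ) c ∩ fᶜ).Nonempty := ⟨0, ⟨le_refl _, hc0⟩, h0f⟩
      have h3 : Set.Ico (0 : ℝ) c ⊆ gᶜ ∪ fᶜ := by
        intro x hx
        by_contra hxc
        simp only [Set.mem_union, Set.mem_compl_iff, not_or, not_not] at hxc
        have : x ∈ f ∩ g := ⟨hxc.2, hxc.1⟩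
        rw [hfg] at this
        exact hx.2.ne this
      obtain ⟨x, hxI, hxg, hxf⟩ := hpre gᶜ fᶜ hgc.isOpen_compl hfc.isOpen_compl h3 h1 h2
      have : x ∈ f ∪ g := by
        rw [huni]; exact ⟨hxI.1, hxI.2.le.trans hc1.le⟩
      rcases this with h | h
      exacts [hxf h, hxg h]
    -- Connectedness: Ioc c 1 ⊆ f
    have hIocf : Set.Ioc c (1 : ℝ) ⊆ f := by
      have hpre := isPreconnected_Ioc (a := c) (b := (1 : ℝ))
      by_contra hcon
      have h1 : (Set.Ioc c (1 : ℝ) ∩ fᶜ).Nonempty := by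
        rw [Set.not_subset] at hcon
        obtain ⟨x, hx1, hx2⟩ := hcon
        exact ⟨x, hx1, hx2⟩
      have h2 : (Set.Ioc c (1 : ℝ) ∩ gᶜ).Nonempty := ⟨1, ⟨hc1, le_refl _⟩, h1g⟩
      have h3 : Set.Ioc c (1 : ℝ) ⊆ fᶜ ∪ gᶜ := by
        intro x hx
        by_contra hxc
        simp only [Set.mem_union, Set.mem_compl_iff, not_or, not_not] at hxc
        have : x ∈ f ∩ g := ⟨hxc.1, hxc.2⟩
        rw [hfg] at this
        exact hx.1.ne' this
      obtain ⟨x, hxI, hxf, hxg⟩ := hpre fᶜ gᶜ hfc.isOpen_compl hgc.isOpen_compl h3 h1 h2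
      have : x ∈ f ∪ g := by
        rw [huni]; exact ⟨hc0.le.trans hxI.1.le, hxI.2⟩
      rcases this with h | h
      exacts [hxf h, hxg h]
    -- g = Icc 0 c
    have hgeq : g = Set.Icc (0 : ℝ) c := by
      apply Set.eq_of_subset_of_subset
      · intro x hxg
        have hxI : x ∈ Set.Icc (0 : ℝ) 1 := hgsub hxg
        refine ⟨hxI.1, ?_⟩
        by_contra hxc
        push_neg at hxc
        have hxf : x ∈ f := hIocf ⟨hxc, hxI.2⟩
        have : x ∈ f ∩ g := ⟨hxf, hxg⟩
        rw [hfg] at this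
        exact hxc.ne' this
      · intro x hx
        rcases lt_or_eq_of_le hx.2 with h | h
        · exact hIcog ⟨hx.1, h⟩
        · exact h ▸ hcg
    -- f = Icc c 1
    have hfeq : f = Set.Icc c (1 : ℝ) := by
      apply Set.eq_of_subset_of_subset
      · intro x hxf
        have hxI : x ∈ Set.Icc (0 : ℝ) 1 := hfsub hxf
        refine ⟨?_, hxI.2⟩
        by_contra hxc
        push_neg at hxc
        have hxg : x ∈ g := hIcog ⟨hxI.1, hxc⟩
        have : x ∈ f ∩ g := ⟨hxf, hxg⟩
        rw [hfg] at this
        exact hxc.ne this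
      · intro x hx
        rcases lt_or_eq_of_le hx.1 with h | h
        · exact hIocf ⟨h, hx.2⟩
        · exact h ▸ hcf
    obtain ⟨q, hq⟩ := goodSet_icc_left hc0 hc1 (hgeq ▸ hgG)
    have hirr : Irrational c := goodSet_icc_right hc0 hc1 (hfeq ▸ hfG)
    exact hirr ⟨q, hq.symm⟩
  · -- Part 2: IndLe 2 [0,1]
    intro A B hA hB hAB
    rcases A.eq_empty_or_nonempty with rfl | hAne
    · refine ⟨∅, isClosed_empty, ⟨∅, Set.univ, isOpen_empty, isOpen_univ, disjoint_bot_left,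
        subset_rfl, Set.subset_univ _, by rw [Set.compl_empty, Set.empty_union]⟩, ?_⟩
      exact indLe_one_of_discrete _
    rcases B.eq_empty_or_nonempty with rfl | hBne
    · refine ⟨∅, isClosed_empty, ⟨Set.univ, ∅, isOpen_univ, isOpen_empty, disjoint_bot_right,
        Set.subset_univ _, subset_rfl, by rw [Set.compl_empty, Set.union_empty]⟩, ?_⟩
      exact indLe_one_of_discrete _
    · -- both nonempty
      set A' : Set ℝ := Subtype.val '' A with hA'
      set B' : Set ℝ := Subtype.val '' B with hB'
      have hA'c : IsCompact A' := (hA.isCompact).image continuous_subtype_val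
      have hB'c : IsCompact B' := (hB.isCompact).image continuous_subtype_val
      have hA'ne : A'.Nonempty := hAne.image _
      have hB'ne : B'.Nonempty := hBne.image _
      obtain ⟨b₀, hb₀, hmin⟩ := hB'c.exists_isMinOn hB'ne ((continuous_infDist_pt A').continuousOn)
      set δ := infDist b₀ A' with hδdef
      have hb₀nA : b₀ ∉ A' := by
        obtain ⟨x, hxB, rfl⟩ := hb₀
        rintro ⟨y, hyA, hyx⟩
        have : y = x := Subtype.val_injective hyx
        subst this
        exact Set.disjoint_left.mp hAB hyA hxB
      have hδ : 0 < δ := (hA'c.isClosed.notMem_iff_infDist_pos hA'ne).mp hb₀nA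
      set c := δ / 2 with hcdef
      have hc : 0 < c := by positivity
      have hcδ : c < δ := by rw [hcdef]; linarith
      have h_cont : Continuous fun x : Set.Icc (0 : ℝ) 1 => infDist (x : ℝ) A' :=
        (continuous_infDist_pt A').comp continuous_subtype_val
      refine ⟨{x : Set.Icc (0 : ℝ) 1 | infDist (x : ℝ) A' = c}, isClosed_eq h_cont continuous_const,
        ⟨{x : Set.Icc (0 : ℝ) 1 | infDist (x : ℝ) A' < c}, {x : Set.Icc (0 : ℝ) 1 | c < infDist (x : ℝ) A'},
          isOpen_lt h_cont continuous_const, isOpen_lt continuous_const h_cont, ?_, ?_, ?_, ?_⟩, ?_⟩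
      · rw [Set.disjoint_left]
        rintro x (hx : infDist (x : ℝ) A' < c) (hx' : c < infDist (x : ℝ) A')
        exact lt_asymm hx hx'
      · intro x hx
        show infDist (x : ℝ) A' < c
        rw [infDist_zero_of_mem (show (x : ℝ) ∈ A' from ⟨x, hx, rfl⟩)]
        exact hc
      · intro x hx
        show c < infDist (x : ℝ) A'
        exact lt_of_lt_of_le hcδ (isMinOn_iff.mp hmin _ ⟨x, hx, rfl⟩)
      · ext x
        simp only [Set.mem_compl_iff, Set.mem_setOf_eq, Set.mem_union]
        constructor
        · exact fun h' => lt_or_gt_of_ne h'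
        · rintro (h' | h') heq
          exacts [h'.ne heq, h'.ne' heq]
      · -- the separator is finite, hence discrete, hence IndLe 1
        have hfin : {x : Set.Icc (0 : ℝ) 1 | infDist (x : ℝ) A' = c}.Finite := by
          have hS : {y : ℝ | y ∈ Set.Icc (0 : ℝ) 1 ∧ infDist y A' = c}.Finite :=
            level_finite hA'c hA'ne hc
          have heq : {x : Set.Icc (0 : ℝ) 1 | infDist (x : ℝ) A' = c}
              = (Subtype.val : Set.Icc (0 : ℝ) 1 → ℝ) ⁻¹' {y : ℝ | y ∈ Set.Icc (0 : ℝ) 1 ∧ infDist y A' = c} := by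
            ext x
            simp only [Set.mem_setOf_eq, Set.mem_preimage]
            exact ⟨fun h => ⟨x.2, h⟩, fun h => h.2⟩
          rw [heq]
          exact hS.preimage (Subtype.val_injective.injOn)
        haveI := hfin.to_subtype
        exact indLe_one_of_discrete _
  · -- Part 3: ¬ IndLe 1 [0,1]
    intro h
    have h01 : (0 : ℝ) ∈ Set.Icc (0 : ℝ) 1 := ⟨le_refl _, zero_le_one⟩
    have h11 : (1 : ℝ) ∈ Set.Icc (0 : ℝ) 1 := ⟨zero_le_one, le_refl _⟩
    set x0 : Set.Icc (0 : ℝ) 1 := ⟨0, h01⟩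
    set x1 : Set.Icc (0 : ℝ) 1 := ⟨1, h11⟩
    have hne : x0 ≠ x1 := by
      intro heq
      have : (0 : ℝ) = 1 := congrArg Subtype.val heq
      exact zero_ne_one this
    obtain ⟨C, hC, ⟨U, V, hU, hV, hUV, hAU, hBV, hcompl⟩, hC0⟩ :=
      h {x0} {x1} isClosed_singleton isClosed_singleton (Set.disjoint_singleton.mpr hne)
    have hCempty : C = ∅ := by
      by_contra hCne
      obtain ⟨x, hx⟩ := Set.nonempty_iff_ne_empty.mpr hCne
      exact (hC0 : IsEmpty C).false ⟨x, hx⟩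
    rw [hCempty, Set.compl_empty] at hcompl
    haveI : PreconnectedSpace (Set.Icc (0 : ℝ) 1) := Subtype.preconnectedSpace isPreconnected_Icc
    have hUclopen : IsClopen U := by
      constructor
      · have : Uᶜ = V := by
          apply Set.eq_of_subset_of_subset
          · intro x hx
            have hxuv : x ∈ U ∪ V := hcompl ▸ Set.mem_univ x
            rcases hxuv with h' | h'
            · exact absurd h' hx
            · exact h'
          · intro x hx
            exact fun hxU => Set.disjoint_left.mp hUV hxU hx
        rw [← isOpen_compl_iff, this]
        exact hV
      · exact hU
    rcases isClopen_iff.mp hUclopen with h' | h'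
    · exact (h' ▸ hAU) rfl
    · have : x1 ∈ U := h' ▸ Set.mem_univ x1
      exact Set.disjoint_left.mp hUV this (hBV rfl)
end

section
/- For a bounded distributive lattice L, the map a ↦ ā = {u ∈ wL : a ∈ u} from L into the closed-set lattice of the Wallman representation wL is injective if and only if L is separative. -/
/-- An ultrafilter on a bounded distributive lattice `L`: a maximal (proper) filter,
i.e. a nonempty upward-closed subset closed under meets, not containing `⊥`, and
maximal among such subsets. -/
structure LatticeUltrafilter (L : Type*) [DistribLattice L] [BoundedOrder L] where
  carrier : Set L
  nonempty' : carrier.Nonempty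
  mem_of_le' : ∀ a ∈ carrier, ∀ b : L, a ≤ b → b ∈ carrier
  inf_mem' : ∀ a ∈ carrier, ∀ b ∈ carrier, a ⊓ b ∈ carrier
  bot_not_mem' : ⊥ ∉ carrier
  maximal' : ∀ F : Set L, F.Nonempty → (∀ a ∈ F, ∀ b : L, a ≤ b → b ∈ F) →
    (∀ a ∈ F, ∀ b ∈ F, a ⊓ b ∈ F) → ⊥ ∉ F → carrier ⊆ F → F = carrier

/-- The basic closed set `ā = {u ∈ wL : a ∈ u}` of the Wallman representation. -/
def wallmanClosed {L : Type*} [DistribLattice L] [BoundedOrder L] (a : L) :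
    Set (LatticeUltrafilter L) :=
  {u | a ∈ u.carrier}

/-- The Wallman topology on the set of ultrafilters of a bounded distributive lattice:
the sets `ā = {u : a ∈ u}` for `a ∈ L` form a base for the closed sets. -/
def wallmanTopology (L : Type*) [DistribLattice L] [BoundedOrder L] :
    TopologicalSpace (LatticeUltrafilter L) :=
  TopologicalSpace.generateFrom {s | ∃ a : L, s = (wallmanClosed a)ᶜ}

section Aux
variable {L : Type*} [DistribLattice L] [BoundedOrder L]

/-- A (proper) filter on `L`. -/
def IsFil (F : Set L) : Prop :=
  F.Nonempty ∧ (∀ a ∈ F, ∀ b : L, a ≤ b → b ∈ F) ∧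
    (∀ a ∈ F, ∀ b ∈ F, a ⊓ b ∈ F) ∧ ⊥ ∉ F

/-- Every nonzero element lies in some ultrafilter (Zorn's lemma). -/
lemma exists_ultrafilter_mem (c : L) (hc : c ≠ ⊥) :
    ∃ u : LatticeUltrafilter L, c ∈ u.carrier := by
  set S : Set (Set L) := {F | IsFil F ∧ c ∈ F} with hS
  have h0 : {x : L | c ≤ x} ∈ S := by
    refine ⟨⟨⟨c, le_refl c⟩, ?_, ?_, ?_⟩, le_refl c⟩
    · exact fun a ha b hab => le_trans ha hab
    · exact fun a ha b hb => le_inf ha hb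
    · simpa [le_bot_iff] using hc
  have hz : ∀ C ⊆ S, IsChain (· ⊆ ·) C → C.Nonempty →
      ∃ ub ∈ S, ∀ s ∈ C, s ⊆ ub := by
    intro C hCS hchain hne
    refine ⟨⋃₀ C, ⟨⟨⟨c, ?_⟩, ?_, ?_, ?_⟩, ?_⟩, fun s hs => Set.subset_sUnion_of_mem hs⟩
    · obtain ⟨F, hF⟩ := hne
      exact ⟨F, hF, (hCS hF).2⟩
    · rintro a ⟨F, hF, haF⟩ b hab
      exact ⟨F, hF, (hCS hF).1.2.1 a haF b hab⟩
    · rintro a ⟨F, hF, haF⟩ b ⟨G, hG, hbG⟩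
      rcases hchain.total hF hG with h | h
      · exact ⟨G, hG, (hCS hG).1.2.2.1 a (h haF) b hbG⟩
      · exact ⟨F, hF, (hCS hF).1.2.2.1 a haF b (h hbG)⟩
    · rintro ⟨F, hF, hbF⟩
      exact (hCS hF).1.2.2.2 hbF
    · obtain ⟨F, hF⟩ := hne
      exact ⟨F, hF, (hCS hF).2⟩
  obtain ⟨M, hsub, hM⟩ := zorn_subset_nonempty S hz _ h0
  refine ⟨⟨M, hM.1.1.1, hM.1.1.2.1, hM.1.1.2.2.1, hM.1.1.2.2.2,
    fun F hne hup hinf hbot hMF => ?_⟩, hM.1.2⟩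
  have hcF : c ∈ F := hMF hM.1.2
  exact subset_antisymm (hM.2 ⟨⟨hne, hup, hinf, hbot⟩, hcF⟩ hMF) hMF

/-- If `b ∉ u` for an ultrafilter `u`, then some `x ∈ u` has `x ⊓ b = ⊥`. -/
lemma exists_disjoint_of_not_mem (u : LatticeUltrafilter L) {b : L}
    (hb : b ∉ u.carrier) : ∃ x ∈ u.carrier, x ⊓ b = ⊥ := by
  by_contra h
  push_neg at h
  set F : Set L := {y | ∃ x ∈ u.carrier, x ⊓ b ≤ y} with hF
  have husub : u.carrier ⊆ F := fun y hy => ⟨y, hy, inf_le_left⟩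
  have hbmem : b ∈ F := by
    obtain ⟨x, hx⟩ := u.nonempty'
    exact ⟨x, hx, inf_le_right⟩
  have hbot : ⊥ ∉ F := by
    rintro ⟨x, hx, hxb⟩
    exact h x hx (le_bot_iff.mp hxb)
  have : F = u.carrier := by
    refine u.maximal' F ⟨b, hbmem⟩ ?_ ?_ hbot husub
    · rintro a ⟨x, hx, hxa⟩ y hay
      exact ⟨x, hx, le_trans hxa hay⟩
    · rintro a ⟨x, hx, hxa⟩ y ⟨z, hz, hzy⟩
      exact ⟨x ⊓ z, u.inf_mem' x hx z hz, by
        calc (x ⊓ z) ⊓ b ≤ (x ⊓ b) ⊓ (z ⊓ b) :=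
              le_inf (inf_le_inf inf_le_left le_rfl) (inf_le_inf inf_le_right le_rfl)
          _ ≤ a ⊓ y := inf_le_inf hxa hzy⟩
  exact hb (this ▸ hbmem)

end Aux

/-- For a bounded distributive lattice `L`, the map `a ↦ ā = {u ∈ wL : a ∈ u}` into the
closed sets of the Wallman representation is injective iff `L` is separative, i.e.
whenever `¬ a ≤ b` there is `c ≤ a` with `c ≠ ⊥` and `c ⊓ b = ⊥`. -/
theorem wallman_injective_iff_separative (L : Type*) [DistribLattice L] [BoundedOrder L] :
    Function.Injective (wallmanClosed (L := L)) ↔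
      ∀ a b : L, ¬ a ≤ b → ∃ c : L, c ≤ a ∧ c ≠ ⊥ ∧ c ⊓ b = ⊥ := by
  constructor
  · intro hinj a b hab
    by_contra h
    push_neg at h
    -- show every ultrafilter containing a contains a ⊓ b
    have key : wallmanClosed a = wallmanClosed (a ⊓ b) := by
      ext u
      simp only [wallmanClosed, Set.mem_setOf_eq]
      constructor
      · intro ha
        have hb : b ∈ u.carrier := by
          by_contra hbu
          obtain ⟨x, hx, hxb⟩ := exists_disjoint_of_not_mem u hbu
          have hc := h (x ⊓ a) (inf_le_right)
          rcases eq_or_ne (x ⊓ a) ⊥ with h0 | h0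
          · exact u.bot_not_mem' (h0 ▸ u.inf_mem' x hx a ha)
          · apply hc h0
            apply le_bot_iff.mp
            calc (x ⊓ a) ⊓ b ≤ x ⊓ b := inf_le_inf inf_le_left le_rfl
              _ = ⊥ := hxb
        exact u.inf_mem' a ha b hb
      · intro hab'
        exact u.mem_of_le' _ hab' a inf_le_left
    have := hinj key
    exact hab (this ▸ inf_le_right : a ≤ b)
  · intro hsep a b hab
    by_contra hne
    have : ¬ a ≤ b ∨ ¬ b ≤ a := by
      by_contra h
      push_neg at h
      exact hne (le_antisymm h.1 h.2)
    -- symmetric argument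
    have main : ∀ x y : L, wallmanClosed x = wallmanClosed y → ¬ x ≤ y → False := by
      intro x y hxy hle
      obtain ⟨c, hca, hc0, hcb⟩ := hsep x y hle
      obtain ⟨u, hcu⟩ := exists_ultrafilter_mem c hc0
      have hxu : x ∈ u.carrier := u.mem_of_le' c hcu x hca
      have hyu : y ∈ u.carrier := by
        have : u ∈ wallmanClosed y := hxy ▸ hxu
        exact this
      have : c ⊓ y ∈ u.carrier := u.inf_mem' c hcu y hyu
      exact u.bot_not_mem' (hcb ▸ this)
    rcases this with h | h
    · exact main a b hab h
    · exact main b a hab.symm h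
end
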